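/- Suppose f_X is positive and twice continuously differentiable on (a,b). Let ψ(y) = log f_Y(y). Then for every y ∈ ℝ, with z = (a + b·e^y)/(1 + e^y), the bound |ψ''(y)| ≤ 2 + (b-a)²·|(log f_X)''(z)| + (b-a)·|(log f_X)'(z)| holds. -/

import Mathlib

/-!
Write `σ` for the logistic function, so that `z = a + (b - a) σ(y)` and the Jacobian factor
`e^y / (1 + e^y)²` is `σ(1 - σ)`. Hence `ψ = log (b - a) + log (σ (1 - σ)) + (log f_X) ∘ z`, and
since `σ' = σ (1 - σ)`, two differentiations give
`ψ'' = -2σ(1 - σ) + (b - a)² (σ(1 - σ))² (log f_X)''(z) + (b - a) σ(1 - σ)(1 - 2σ) (log f_X)'(z)`.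
The bounds `0 < σ(1 - σ) ≤ 1/4` and `|1 - 2σ| ≤ 1` finish the estimate.
-/

open Real Set

namespace Real

lemma exp_div_one_add_exp (x : ℝ) : exp x / (1 + exp x) = sigmoid x := by
  rw [sigmoid_def, exp_neg]
  field_simp
  ring

lemma exp_div_one_add_exp_sq (x : ℝ) :
    exp x / (1 + exp x) ^ 2 = sigmoid x * (1 - sigmoid x) := by
  rw [← exp_div_one_add_exp]
  field_simp
  ring

lemma add_mul_exp_div_one_add_exp (a b x : ℝ) :
    (a + b * exp x) / (1 + exp x) = a + (b - a) * sigmoid x := by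
  rw [← exp_div_one_add_exp]
  field_simp
  ring

lemma sigmoid_mul_one_sub_pos (x : ℝ) : 0 < sigmoid x * (1 - sigmoid x) :=
  mul_pos (sigmoid_pos x) (sub_pos.mpr (sigmoid_lt_one x))

lemma sigmoid_mul_one_sub_le (x : ℝ) : sigmoid x * (1 - sigmoid x) ≤ 1 / 4 := by
  nlinarith [sq_nonneg (2 * sigmoid x - 1)]

lemma abs_one_sub_two_mul_sigmoid_le (x : ℝ) : |1 - 2 * sigmoid x| ≤ 1 := by
  rw [abs_le]
  constructor <;> linarith [sigmoid_pos x, sigmoid_lt_one x]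

lemma hasDerivAt_sigmoid_mul_one_sub (x : ℝ) :
    HasDerivAt (fun t => sigmoid t * (1 - sigmoid t))
      (sigmoid x * (1 - sigmoid x) * (1 - 2 * sigmoid x)) x := by
  have hσ := hasDerivAt_sigmoid x
  exact (hσ.mul (hσ.const_sub 1)).congr_deriv (by ring)

lemma hasDerivAt_log_sigmoid_mul_one_sub (x : ℝ) :
    HasDerivAt (fun t => log (sigmoid t * (1 - sigmoid t))) (1 - 2 * sigmoid x) x := by
  have hpos := sigmoid_mul_one_sub_pos x
  exact ((hasDerivAt_sigmoid_mul_one_sub x).log hpos.ne').congr_deriv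
    (mul_div_cancel_left₀ _ hpos.ne')

lemma add_mul_sigmoid_mem_Ioo {a b : ℝ} (hab : a < b) (x : ℝ) :
    a + (b - a) * sigmoid x ∈ Ioo a b := by
  have hba : 0 < b - a := sub_pos.mpr hab
  constructor <;> nlinarith [sigmoid_pos x, sigmoid_lt_one x]

end Real

lemma hasDerivAt_deriv_comp {g L L' : ℝ → ℝ} {t L'' g'' : ℝ}
    (hL : ∀ s, HasDerivAt L (L' s) s) (hL' : HasDerivAt L' L'' t)
    (hg : ∀ s, DifferentiableAt ℝ g (L s)) (hg' : HasDerivAt (deriv g) g'' (L t)) :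
    HasDerivAt (deriv fun s => g (L s)) (g'' * L' t ^ 2 + deriv g (L t) * L'') t := by
  have hderiv : (deriv fun s => g (L s)) = fun s => deriv g (L s) * L' s :=
    funext fun s => ((hg s).hasDerivAt.comp s (hL s)).deriv
  rw [hderiv]
  exact ((hg'.comp t (hL t)).mul hL').congr_deriv (by rw [Function.comp_apply]; ring)

section LogitTransform

variable {a b : ℝ} {g : ℝ → ℝ}

lemma hasDerivAt_deriv_log_transform (hab : a < b) (hg : ContDiffOn ℝ 2 g (Ioo a b)) (y : ℝ) :
    HasDerivAt
      (deriv fun t => log (b - a) + log (sigmoid t * (1 - sigmoid t)) +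
        g (a + (b - a) * sigmoid t))
      (-2 * (sigmoid y * (1 - sigmoid y)) +
        deriv (deriv g) (a + (b - a) * sigmoid y) * ((b - a) * (sigmoid y * (1 - sigmoid y))) ^ 2 +
        deriv g (a + (b - a) * sigmoid y) *
          ((b - a) * (sigmoid y * (1 - sigmoid y) * (1 - 2 * sigmoid y)))) y := by
  set L : ℝ → ℝ := fun t => a + (b - a) * sigmoid t
  have hL : ∀ s, HasDerivAt L ((b - a) * (sigmoid s * (1 - sigmoid s))) s := fun s =>
    ((hasDerivAt_sigmoid s).const_mul (b - a)).const_add a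
  have hg1 : ∀ s, DifferentiableAt ℝ g (L s) := fun s =>
    (hg.differentiableOn two_ne_zero).differentiableAt
      (isOpen_Ioo.mem_nhds (add_mul_sigmoid_mem_Ioo hab s))
  have hg2 : HasDerivAt (deriv g) (deriv (deriv g) (L y)) (L y) :=
    (((hg.deriv_of_isOpen isOpen_Ioo (by norm_num) : ContDiffOn ℝ 1 _ _).differentiableOn
      one_ne_zero).differentiableAt (isOpen_Ioo.mem_nhds (add_mul_sigmoid_mem_Ioo hab y))).hasDerivAt
  have hderiv : (deriv fun t => log (b - a) + log (sigmoid t * (1 - sigmoid t)) + g (L t)) =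
      fun t => (1 - 2 * sigmoid t) + deriv (fun s => g (L s)) t :=
    funext fun t =>
      (((hasDerivAt_log_sigmoid_mul_one_sub t).const_add _).add (hg1 t |>.comp t
        (hL t).differentiableAt).hasDerivAt).deriv
  rw [hderiv]
  have hlin : HasDerivAt (fun t => 1 - 2 * sigmoid t) (-2 * (sigmoid y * (1 - sigmoid y))) y :=
    (((hasDerivAt_sigmoid y).const_mul 2).const_sub 1).congr_deriv (by ring)
  exact (hlin.add (hasDerivAt_deriv_comp hL
    ((hasDerivAt_sigmoid_mul_one_sub y).const_mul (b - a)) hg1 hg2)).congr_deriv (by ring)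

end LogitTransform

lemma abs_logit_second_deriv_le {s c d G₁ G₂ : ℝ} (hs : 0 < s) (hs' : s ≤ 1) (hc : |c| ≤ 1)
    (hd : 0 < d) :
    |-2 * s + G₂ * (d * s) ^ 2 + G₁ * (d * (s * c))| ≤ 2 + d ^ 2 * |G₂| + d * |G₁| := by
  have h1 : |-2 * s| ≤ 2 := by rw [abs_le]; constructor <;> linarith
  have h2 : |G₂ * (d * s) ^ 2| ≤ d ^ 2 * |G₂| := by
    rw [abs_mul, abs_pow, abs_mul, abs_of_pos hd, abs_of_pos hs, mul_comm]
    gcongr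
    nlinarith
  have h3 : |G₁ * (d * (s * c))| ≤ d * |G₁| := by
    rw [abs_mul, abs_mul, abs_mul, abs_of_pos hd, abs_of_pos hs, mul_comm]
    gcongr
    exact mul_le_of_le_one_right hd.le (by nlinarith [abs_nonneg c])
  calc _ ≤ |-2 * s| + |G₂ * (d * s) ^ 2| + |G₁ * (d * (s * c))| := abs_add_three _ _ _
    _ ≤ _ := by linarith

/-- If `f_X` is positive and twice continuously differentiable on `(a,b)`, then
with `ψ(y) = log f_Y(y)` where `f_Y(y) = (b-a)·(e^y/(1+e^y)²)·f_X((a+b·e^y)/(1+e^y))`, for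
every `y ∈ ℝ`, writing `z = (a+b·e^y)/(1+e^y)`, the bound
`|ψ''(y)| ≤ 2 + (b-a)²·|(log f_X)''(z)| + (b-a)·|(log f_X)'(z)|` holds. -/
theorem transformed_density_log_second_deriv_bound (a b : ℝ) (hab : a < b)
    (fX fY : ℝ → ℝ)
    (hfY : ∀ y : ℝ, fY y =
      (b - a) * (Real.exp y / (1 + Real.exp y) ^ 2) *
        fX ((a + b * Real.exp y) / (1 + Real.exp y)))
    (hpos : ∀ x ∈ Set.Ioo a b, 0 < fX x)
    (hsmooth : ContDiffOn ℝ 2 fX (Set.Ioo a b)) :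
    ∀ y : ℝ,
      |deriv (deriv fun t => Real.log (fY t)) y| ≤
        2 + (b - a) ^ 2 *
            |deriv (deriv fun z => Real.log (fX z)) ((a + b * Real.exp y) / (1 + Real.exp y))| +
          (b - a) *
            |deriv (fun z => Real.log (fX z)) ((a + b * Real.exp y) / (1 + Real.exp y))| := by
  intro y
  have hba : 0 < b - a := sub_pos.mpr hab
  have hψ : (fun t => log (fY t)) = fun t => log (b - a) + log (sigmoid t * (1 - sigmoid t)) +
      log (fX (a + (b - a) * sigmoid t)) := by
    funext t
    rw [hfY, exp_div_one_add_exp_sq, add_mul_exp_div_one_add_exp,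
      log_mul (by positivity [sigmoid_mul_one_sub_pos t]) (hpos _ (add_mul_sigmoid_mem_Ioo hab t)).ne',
      log_mul hba.ne' (sigmoid_mul_one_sub_pos t).ne']
  have hlog : ContDiffOn ℝ 2 (fun z => log (fX z)) (Ioo a b) :=
    hsmooth.log fun x hx => (hpos x hx).ne'
  rw [hψ, (hasDerivAt_deriv_log_transform hab hlog y).deriv, add_mul_exp_div_one_add_exp]
  exact abs_logit_second_deriv_le (sigmoid_mul_one_sub_pos y) ((sigmoid_mul_one_sub_le y).trans (by norm_num))
    (abs_one_sub_two_mul_sigmoid_le y) hba
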